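/- arXiv:2512.20542 — 2 statements merged into one kernel-verified Lean document; each statement's English description precedes it below -/
import Mathlib

section
/- (Franel's identity) For all positive integers m, n, ∫₀¹ b₁(m x)·b₁(n x) dx = gcd(m,n)² / (12 m n), where b₁(x) = {x} - 1/2 is the first periodic Bernoulli function (note: with g = gcd(m,n), the value equals g/(12·(m/g)·(n/g)·g) = g²/(12mn)). -/
/-!
Write `m = g m'`, `n = g n'` with `m'`, `n'` coprime; since the integrand for `(m', n')` is
1-periodic, the substitution `x ↦ g x` does not change its integral over `[0, 1]`. For coprime
`m`, `n`, substituting `u = m x` and cutting `[0, m]` into unit intervals gives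
`∫ b₁(m x) b₁(n x) = m⁻¹ ∫ b₁(x) ∑_{k < m} b₁(n (x + k) / m)`. As `k ↦ n k` permutes the residues
mod `m`, Raabe's multiplication formula `∑_{k < m} b₁((t + k) / m) = b₁(t)` collapses the sum to
`b₁(n x)`. Doing this once more, with the roles of the two factors exchanged, leaves
`(m n)⁻¹ ∫₀¹ b₁(x)² dx = 1 / (12 m n)`.
-/

open Finset Function MeasureTheory intervalIntegral

noncomputable def sawtooth (x : ℝ) : ℝ := Int.fract x - 1 / 2

lemma sawtooth_periodic : Periodic sawtooth 1 := by
  simp [Periodic, sawtooth]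

lemma sawtooth_eq_of_mem_Ico {x : ℝ} (hx : x ∈ Set.Ico 0 1) : sawtooth x = x - 1 / 2 := by
  rw [sawtooth, Int.fract_eq_self.mpr hx]

lemma abs_sawtooth_le (x : ℝ) : |sawtooth x| ≤ 1 := by
  have := Int.fract_nonneg x
  have := Int.fract_lt_one x
  rw [abs_le, sawtooth]
  constructor <;> linarith

lemma measurable_sawtooth : Measurable sawtooth :=
  measurable_fract.sub_const _

lemma intervalIntegrable_sawtooth_comp_mul_sawtooth_comp {p q : ℝ → ℝ} (hp : Measurable p)
    (hq : Measurable q) (a b : ℝ) :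
    IntervalIntegrable (fun x => sawtooth (p x) * sawtooth (q x)) volume a b := by
  refine (intervalIntegrable_const (c := (1 : ℝ))).mono_fun' ?_ (ae_of_all _ fun x => ?_)
  · exact ((measurable_sawtooth.comp hp).mul (measurable_sawtooth.comp hq)).aestronglyMeasurable
  · simp only [norm_mul, Real.norm_eq_abs]
    exact mul_le_one₀ (abs_sawtooth_le _) (abs_nonneg _) (abs_sawtooth_le _)

lemma Function.Periodic.sum_range_comp_add_div {M : Type*} [AddCommGroup M] {f : ℝ → M}
    (hf : Periodic f 1) (m : ℕ) : Periodic (fun t => ∑ j ∈ range m, f ((t + j) / m)) 1 := by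
  intro t
  rcases Nat.eq_zero_or_pos m with rfl | hm
  · simp
  have hlast : f ((t + m) / m) = f ((t + 0) / m) := by
    rw [add_div, div_self (by positivity), hf, add_zero]
  have := (sum_range_succ' (fun j : ℕ => f ((t + j) / m)) m).symm
  rw [sum_range_succ, Nat.cast_zero, ← hlast, add_left_inj] at this
  simpa only [Nat.cast_succ, add_assoc, add_comm (1 : ℝ)] using this

lemma sum_range_sawtooth_add_div_of_mem_Ico {m : ℕ} (hm : 0 < m) {s : ℝ} (hs : s ∈ Set.Ico 0 1) :
    ∑ j ∈ range m, sawtooth ((s + j) / m) = sawtooth s := by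
  have hm' : (0 : ℝ) < m := by exact_mod_cast hm
  have hmem : ∀ j ∈ range m, (s + j) / m ∈ Set.Ico 0 1 := fun j hj => by
    have : (j : ℝ) + 1 ≤ m := by exact_mod_cast mem_range.mp hj
    constructor
    · have := hs.1; positivity
    · rw [div_lt_one hm']; linarith [hs.2]
  have hgauss : (∑ j ∈ range m, (j : ℝ)) * 2 = m * (m - 1) := by
    rw [← Nat.cast_sum, ← Nat.cast_ofNat, ← Nat.cast_mul, sum_range_id_mul_two, Nat.cast_mul,
      Nat.cast_sub hm, Nat.cast_one]
  rw [sum_congr rfl fun j hj => sawtooth_eq_of_mem_Ico (hmem j hj), sawtooth_eq_of_mem_Ico hs,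
    sum_sub_distrib, ← sum_div, sum_add_distrib]
  simp only [sum_const, card_range, nsmul_eq_mul]
  field_simp
  linear_combination hgauss

lemma sum_range_sawtooth_add_div {m : ℕ} (hm : 0 < m) (t : ℝ) :
    ∑ j ∈ range m, sawtooth ((t + j) / m) = sawtooth t := by
  have hfract := (sawtooth_periodic.sum_range_comp_add_div m).sub_int_mul_eq (x := t) ⌊t⌋
  rw [mul_one, Int.self_sub_floor] at hfract
  rw [← hfract, sum_range_sawtooth_add_div_of_mem_Ico hm ⟨Int.fract_nonneg t, Int.fract_lt_one t⟩,
    sawtooth, sawtooth, Int.fract_fract]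

lemma Function.Periodic.sum_range_comp_mul_of_coprime {M : Type*} [AddCommMonoid M] {g : ℕ → M}
    {m n : ℕ} (hg : Periodic g m) (h : m.Coprime n) :
    ∑ k ∈ range m, g (n * k) = ∑ k ∈ range m, g k := by
  have hmaps : ∀ k ∈ range m, n * k % m ∈ range m := fun k hk =>
    mem_range.mpr (Nat.mod_lt _ (Nat.zero_lt_of_lt (mem_range.mp hk)))
  have hinj : Set.InjOn (fun k => n * k % m) (range m) := fun x hx y hy hxy =>
    (Nat.ModEq.cancel_left_of_coprime h hxy).eq_of_lt_of_lt (mem_range.mp hx) (mem_range.mp hy)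
  exact sum_nbij _ hmaps hinj (surjOn_of_injOn_of_card_le _ hmaps hinj le_rfl)
    fun k _ => (hg.map_mod_nat _).symm

lemma sum_range_sawtooth_add_mul_div {m n : ℕ} (hm : 0 < m) (h : m.Coprime n) (c : ℝ) :
    ∑ k ∈ range m, sawtooth ((c + n * k) / m) = sawtooth c := by
  have hg : Periodic (fun j : ℕ => sawtooth ((c + j) / m)) m := fun j => by
    dsimp only
    rw [Nat.cast_add, ← add_assoc, add_div _ (m : ℝ), div_self (by positivity), sawtooth_periodic]
  simpa only [Nat.cast_mul] using
    (hg.sum_range_comp_mul_of_coprime h).trans (sum_range_sawtooth_add_div hm c)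

lemma Function.Periodic.intervalIntegral_comp_natCast_mul_mul {f h : ℝ → ℝ} {m : ℕ}
    (hf : Periodic f 1) (hm : 0 < m)
    (hint : ∀ a b, IntervalIntegrable (fun u => f u * h (u / m)) volume a b) :
    ∫ x in 0..1, f (m * x) * h x =
      (m : ℝ)⁻¹ * ∫ x in 0..1, f x * ∑ k ∈ range m, h ((x + k) / m) := by
  set F : ℝ → ℝ := fun u => f u * h (u / m)
  have hm0 : (m : ℝ) ≠ 0 := by positivity
  have hsubst : ∫ x in 0..1, f (m * x) * h x = (m : ℝ)⁻¹ * ∫ u in 0..(m : ℝ), F u := by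
    have := integral_comp_mul_left F hm0 (a := 0) (b := 1)
    rw [mul_zero, mul_one, smul_eq_mul] at this
    rw [← this]
    simp only [F, mul_div_cancel_left₀ _ hm0]
  have hsplit : ∫ u in 0..(m : ℝ), F u = ∑ k ∈ range m, ∫ u in 0..1, F (u + k) := by
    have := sum_integral_adjacent_intervals (a := fun k : ℕ => (k : ℝ)) (n := m)
      fun k _ => hint _ _
    rw [Nat.cast_zero] at this
    rw [← this]
    refine sum_congr rfl fun k _ => ?_
    rw [integral_comp_add_right, zero_add, Nat.cast_succ, add_comm (1 : ℝ)]
  have hshift : ∀ u, ∑ k ∈ range m, F (u + k) = f u * ∑ k ∈ range m, h ((u + k) / m) := by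
    intro u
    rw [mul_sum]
    refine sum_congr rfl fun k _ => ?_
    simpa [F] using congrArg (· * h ((u + k) / m)) ((hf.nat_mul k) u)
  have hint_shift : ∀ k ∈ range m, IntervalIntegrable (fun u => F (u + k)) volume 0 1 :=
    fun k _ => by simpa using (hint k (k + 1)).comp_add_right k
  rw [hsubst, hsplit, ← integral_finsetSum hint_shift]
  simp_rw [hshift]

lemma Function.Periodic.intervalIntegral_comp_natCast_mul {E : Type*} [NormedAddCommGroup E]
    [NormedSpace ℝ E] {F : ℝ → E} (hF : Periodic F 1)
    (hint : ∀ a b, IntervalIntegrable F volume a b) {d : ℕ} (hd : 0 < d) :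
    ∫ x in 0..1, F (d * x) = ∫ x in 0..1, F x := by
  have hd0 : (d : ℝ) ≠ 0 := by positivity
  have := hF.intervalIntegral_add_zsmul_eq d 0 hint
  rw [zero_add, zero_add, natCast_zsmul, nsmul_one] at this
  rw [integral_comp_mul_left F hd0, mul_zero, mul_one, this, ← Int.cast_smul_eq_zsmul ℝ,
    Int.cast_natCast, inv_smul_smul₀ hd0]

lemma integral_sawtooth_mul_self : ∫ x in 0..1, sawtooth x * sawtooth x = 1 / 12 := by
  have hIoo : ∀ x ∈ Set.Ioo (0 : ℝ) 1, sawtooth x * sawtooth x = (x - 1 / 2) ^ 2 := fun x hx => by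
    rw [sawtooth_eq_of_mem_Ico (Set.Ioo_subset_Ico_self hx), sq]
  rw [integral_of_le zero_le_one, integral_Ioc_eq_integral_Ioo,
    setIntegral_congr_fun measurableSet_Ioo hIoo, ← integral_Ioc_eq_integral_Ioo,
    ← integral_of_le zero_le_one, integral_comp_sub_right (· ^ 2), integral_pow]
  norm_num

lemma integral_sawtooth_mul_sawtooth_eq_inv_mul_of_coprime {m n : ℕ} (hm : 0 < m)
    (h : m.Coprime n) :
    ∫ x in 0..1, sawtooth (m * x) * sawtooth (n * x) =
      (m : ℝ)⁻¹ * ∫ x in 0..1, sawtooth x * sawtooth (n * x) := by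
  rw [sawtooth_periodic.intervalIntegral_comp_natCast_mul_mul (h := fun x => sawtooth (n * x)) hm
    (intervalIntegrable_sawtooth_comp_mul_sawtooth_comp measurable_id (by fun_prop))]
  congr 1
  refine integral_congr fun x _ => ?_
  simp only [mul_div_assoc', mul_add, sum_range_sawtooth_add_mul_div hm h]

lemma integral_sawtooth_mul_sawtooth_of_coprime {m n : ℕ} (hm : 0 < m) (hn : 0 < n)
    (h : m.Coprime n) :
    ∫ x in 0..1, sawtooth (m * x) * sawtooth (n * x) = 1 / (12 * m * n) := by
  have hswap : ∫ x in 0..1, sawtooth x * sawtooth (n * x) =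
      ∫ x in 0..1, sawtooth (n * x) * sawtooth ((1 : ℕ) * x) := by
    refine integral_congr fun x _ => ?_
    rw [Nat.cast_one, one_mul, mul_comm]
  rw [integral_sawtooth_mul_sawtooth_eq_inv_mul_of_coprime hm h, hswap,
    integral_sawtooth_mul_sawtooth_eq_inv_mul_of_coprime hn (Nat.coprime_one_right n)]
  simp only [Nat.cast_one, one_mul, integral_sawtooth_mul_self]
  field_simp

theorem franel_identity (m n : ℕ) (hm : 0 < m) (hn : 0 < n) :
    ∫ x in (0:ℝ)..1, (Int.fract (m * x) - 1/2) * (Int.fract (n * x) - 1/2)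
      = (Nat.gcd m n : ℝ)^2 / (12 * m * n) := by
  obtain ⟨g, m', n', hg, hco, rfl, rfl⟩ := Nat.exists_coprime' (Nat.gcd_pos_of_pos_left n hm)
  have hm' : 0 < m' := Nat.pos_of_mul_pos_right hm
  have hn' : 0 < n' := Nat.pos_of_mul_pos_right hn
  have hperiodic : Periodic (fun x => sawtooth (m' * x) * sawtooth (n' * x)) 1 := fun x => by
    simp [sawtooth, mul_add]
  calc ∫ x in (0:ℝ)..1,
        (Int.fract ((m' * g : ℕ) * x) - 1/2) * (Int.fract ((n' * g : ℕ) * x) - 1/2)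
      = ∫ x in (0:ℝ)..1, sawtooth (m' * (g * x)) * sawtooth (n' * (g * x)) := by
        simp only [sawtooth, Nat.cast_mul, mul_assoc]
    _ = ∫ x in (0:ℝ)..1, sawtooth (m' * x) * sawtooth (n' * x) :=
        hperiodic.intervalIntegral_comp_natCast_mul
          (intervalIntegrable_sawtooth_comp_mul_sawtooth_comp (by fun_prop) (by fun_prop)) hg
    _ = 1 / (12 * m' * n') := integral_sawtooth_mul_sawtooth_of_coprime hm' hn' hco
    _ = (Nat.gcd (m' * g) (n' * g) : ℝ)^2 / (12 * (m' * g : ℕ) * (n' * g : ℕ)) := by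
        rw [Nat.gcd_mul_right, hco.gcd_eq_one, one_mul]
        push_cast
        field_simp
end

section
/- (Convergence of the lattice multiple zeta value) For any vector ν of pairwise distinct positive integers and any q = (q₀,…,q_r) with all q_j ≥ 1 and r ≥ 1, the sum ζ_{ν,q} := Σ_{n ∈ ν^⊥_{ℤ×}} ∏_{j=0}^{r} |n_j|^{−q_j} converges (is finite), where ν^⊥_{ℤ×} = { n ∈ (ℤ∖{0})^{r+1} : Σ ν_j n_j = 0 }. -/
/-!
Since `|n_j| ≥ 1` and `q_j ≥ 1`, it suffices to bound `∏_j |n_j|⁻¹`. Let `k` be an index where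
`|n_k|` is maximal. Since `|n_k|` dominates the geometric mean of the other `r` coordinates,
`∏_j |n_j|⁻¹ ≤ ∏_{j ≠ k} |n_j|^{-(1 + 1/r)}`, and the right-hand side is summable over `ℤ^r`.
As `ν_k ≠ 0`, a lattice point is determined by its coordinates off `k`, so for each of the
finitely many choices of `k` the sum over the lattice injects into that summable sum.
-/

open Finset

theorem summable_prod_apply_of_nonneg {ι κ : Type*} [Fintype ι] {g : ι → κ → ℝ}
    (hg₀ : ∀ i x, 0 ≤ g i x) (hg : ∀ i, Summable (g i)) :
    Summable fun m : ι → κ => ∏ i, g i (m i) := by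
  classical
  refine summable_of_sum_le (c := ∏ i, ∑' x, g i x)
    (fun m => prod_nonneg fun i _ => hg₀ i (m i)) fun s => ?_
  have hs : s ⊆ Fintype.piFinset fun i => s.image (· i) := fun m hm =>
    Fintype.mem_piFinset.2 fun i => mem_image_of_mem _ hm
  calc ∑ m ∈ s, ∏ i, g i (m i)
      ≤ ∑ m ∈ Fintype.piFinset (fun i => s.image (· i)), ∏ i, g i (m i) :=
        sum_le_sum_of_subset_of_nonneg hs fun m _ _ => prod_nonneg fun i _ => hg₀ i (m i)
    _ = ∏ i, ∑ x ∈ s.image (· i), g i x := (prod_univ_sum _ _).symm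
    _ ≤ ∏ i, ∑' x, g i x :=
        prod_le_prod (fun i _ => sum_nonneg fun x _ => hg₀ i x)
          fun i _ => (hg i).sum_le_tsum _ fun x _ => hg₀ i x

theorem Fin.eq_of_sum_mul_eq_of_comp_succAbove_eq {R : Type*} [Ring R] [NoZeroDivisors R]
    {r : ℕ} {ν n m : Fin (r + 1) → R} {k : Fin (r + 1)} (hν : ν k ≠ 0)
    (h : ∑ j, ν j * n j = ∑ j, ν j * m j) (hk : n ∘ k.succAbove = m ∘ k.succAbove) :
    n = m := by
  have hoff : ∀ i, n (k.succAbove i) = m (k.succAbove i) := congrFun hk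
  have hnk : n k = m k := by
    simp_rw [Fin.sum_univ_succAbove _ k, hoff] at h
    exact mul_left_cancel₀ hν (add_right_cancel h)
  funext j
  rcases Fin.eq_self_or_eq_succAbove k j with rfl | ⟨i, rfl⟩
  exacts [hnk, hoff i]

theorem prod_succAbove_rpow_le_prod {r : ℕ} {a : Fin (r + 1) → ℝ} (ha : ∀ j, 1 ≤ a j)
    {k : Fin (r + 1)} (hk : ∀ j, a j ≤ a k) :
    ∏ i : Fin r, a (k.succAbove i) ^ (1 + (r : ℝ)⁻¹) ≤ ∏ j, a j := by
  have ha₀ : ∀ j, 0 ≤ a j := fun j => zero_le_one.trans (ha j)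
  have hgeom : ∏ i : Fin r, a (k.succAbove i) ^ (r : ℝ)⁻¹ ≤ a k :=
    calc ∏ i : Fin r, a (k.succAbove i) ^ (r : ℝ)⁻¹
        ≤ ∏ _i : Fin r, a k ^ (r : ℝ)⁻¹ :=
          prod_le_prod (fun i _ => Real.rpow_nonneg (ha₀ _) _)
            fun i _ => Real.rpow_le_rpow (ha₀ _) (hk _) (by positivity)
      _ = a k ^ ((r : ℝ)⁻¹ * r) := by
          rw [prod_const, card_univ, Fintype.card_fin, Real.rpow_mul_natCast (ha₀ k)]
      _ ≤ a k ^ (1 : ℝ) :=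
          Real.rpow_le_rpow_of_exponent_le (ha k) (inv_mul_le_one_of_le₀ le_rfl (by positivity))
      _ = a k := Real.rpow_one _
  calc ∏ i : Fin r, a (k.succAbove i) ^ (1 + (r : ℝ)⁻¹)
      = (∏ i : Fin r, a (k.succAbove i) ^ (r : ℝ)⁻¹) * ∏ i : Fin r, a (k.succAbove i) := by
        rw [← prod_mul_distrib]
        refine prod_congr rfl fun i _ => ?_
        rw [Real.rpow_add' (ha₀ _) (by positivity), Real.rpow_one, mul_comm]
    _ ≤ a k * ∏ i : Fin r, a (k.succAbove i) :=
        mul_le_mul_of_nonneg_right hgeom (prod_nonneg fun i _ => ha₀ _)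
    _ = ∏ j, a j := (Fin.prod_univ_succAbove a k).symm

theorem prod_zpow_neg_le_sum_prod_succAbove_rpow_neg {r : ℕ} {a : Fin (r + 1) → ℝ}
    (ha : ∀ j, 1 ≤ a j) {q : Fin (r + 1) → ℕ} (hq : ∀ j, 1 ≤ q j) :
    ∏ j, a j ^ (-(q j : ℤ)) ≤
      ∑ k : Fin (r + 1), ∏ i : Fin r, a (k.succAbove i) ^ (-(1 + (r : ℝ)⁻¹)) := by
  have ha₀ : ∀ j, 0 < a j := fun j => zero_lt_one.trans_le (ha j)
  obtain ⟨k, -, hk⟩ := exists_max_image univ a univ_nonempty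
  calc ∏ j, a j ^ (-(q j : ℤ))
      ≤ ∏ j, a j ^ (-1 : ℤ) :=
        prod_le_prod (fun j _ => zpow_nonneg (ha₀ j).le _) fun j _ =>
          zpow_le_zpow_right₀ (ha j) (neg_le_neg (mod_cast hq j))
    _ = (∏ j, a j)⁻¹ := by simp only [zpow_neg_one, prod_inv_distrib]
    _ ≤ (∏ i : Fin r, a (k.succAbove i) ^ (1 + (r : ℝ)⁻¹))⁻¹ :=
        inv_anti₀ (prod_pos fun _ _ => Real.rpow_pos_of_pos (ha₀ _) _)
          (prod_succAbove_rpow_le_prod ha fun j => hk j (mem_univ j))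
    _ = ∏ i : Fin r, a (k.succAbove i) ^ (-(1 + (r : ℝ)⁻¹)) := by
        rw [← prod_inv_distrib]
        exact prod_congr rfl fun i _ => (Real.rpow_neg (ha₀ _).le _).symm
    _ ≤ ∑ k : Fin (r + 1), ∏ i : Fin r, a (k.succAbove i) ^ (-(1 + (r : ℝ)⁻¹)) :=
        single_le_sum (f := fun k : Fin (r + 1) => ∏ i, a (k.succAbove i) ^ (-(1 + (r : ℝ)⁻¹)))
          (fun k _ => prod_nonneg fun i _ => Real.rpow_nonneg (ha₀ _).le _) (mem_univ k)

theorem lattice_zeta_summable_general (r : ℕ) (ν : Fin (r+1) → ℕ)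
    (hpos : ∀ j, 0 < ν j)
    (q : Fin (r+1) → ℕ) (hq : ∀ j, 1 ≤ q j) :
    Summable (fun n : {n : Fin (r+1) → ℤ // (∀ j, n j ≠ 0) ∧ ∑ j, (ν j : ℤ) * n j = 0} =>
      ∏ j, (|(n.1 j : ℝ)|) ^ (-(q j : ℤ))) := by
  classical
  set S := {n : Fin (r+1) → ℤ // (∀ j, n j ≠ 0) ∧ ∑ j, (ν j : ℤ) * n j = 0}
  set p : ℝ := 1 + (r : ℝ)⁻¹
  -- Stated over `Fin r` because for `r = 0` the exponent is `1 + 0⁻¹ = 1`.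
  have hp : ∀ i : Fin r, 1 < p := fun i =>
    lt_add_of_pos_right 1 (inv_pos.2 (mod_cast i.pos))
  have hdom : ∀ n : S, ∏ j, |(n.1 j : ℝ)| ^ (-(q j : ℤ)) ≤
      ∑ k : Fin (r + 1), ∏ i, |(n.1 (k.succAbove i) : ℝ)| ^ (-p) := fun n =>
    prod_zpow_neg_le_sum_prod_succAbove_rpow_neg
      (fun j => by exact_mod_cast Int.one_le_abs (n.2.1 j)) hq
  have hinj : ∀ k : Fin (r + 1), Function.Injective fun n : S => n.1 ∘ k.succAbove :=
    fun k n m h => Subtype.ext <|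
      Fin.eq_of_sum_mul_eq_of_comp_succAbove_eq (by exact_mod_cast (hpos k).ne')
        (n.2.2.trans m.2.2.symm) h
  have hmajorant : Summable fun m : Fin r → ℤ => ∏ i, |(m i : ℝ)| ^ (-p) :=
    summable_prod_apply_of_nonneg (g := fun (_ : Fin r) (x : ℤ) => |(x : ℝ)| ^ (-p))
      (fun _ _ => Real.rpow_nonneg (abs_nonneg _) _) fun i => Real.summable_abs_int_rpow (hp i)
  exact Summable.of_nonneg_of_le (fun n => prod_nonneg fun j _ => zpow_nonneg (abs_nonneg _) _)
    hdom (summable_sum fun k _ => hmajorant.comp_injective (hinj k))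

theorem lattice_zeta_summable (r : ℕ) (hr : 1 ≤ r) (ν : Fin (r+1) → ℕ)
    (hpos : ∀ j, 0 < ν j) (hdist : ∀ j l, j ≠ l → ν j ≠ ν l)
    (q : Fin (r+1) → ℕ) (hq : ∀ j, 1 ≤ q j) :
    Summable (fun n : {n : Fin (r+1) → ℤ // (∀ j, n j ≠ 0) ∧ ∑ j, (ν j : ℤ) * n j = 0} =>
      ∏ j, (|(n.1 j : ℝ)|) ^ (-(q j : ℤ))) :=
  lattice_zeta_summable_general r ν hpos q hq
end
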